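/- Let V be a finite type of variables with a constraint system (P, N, S). If there exist assignments M, T : V → ZFSet such that M models the literals P and N and the pair (M, T) satisfies the Ξ-conditions for (P, N, S), then there exists an assignment M'' : V → ZFSet that models the whole system (P, N, S), i.e. M'' a = M'' b \ M'' c for every (a,b,c) ∈ P, M'' a ≠ M'' b \ M'' c for every (a,b,c) ∈ N, and M'' a = {M'' b} for every (a,b) ∈ S. -/

import Mathlib

/-- `M` models the positive literals `a = b \ c` in `P` and the negative literals
`a ≠ b \ c` in `N`. -/
def ModelsLits {V : Type*} (P N : Finset (V × V × V)) (M : V → ZFSet) : Prop :=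
  (∀ t ∈ P, M t.1 = M t.2.1 \ M t.2.2) ∧ (∀ t ∈ N, M t.1 ≠ M t.2.1 \ M t.2.2)

/-- `M` models the whole constraint system `(P, N, S)`. -/
def ModelsSystem {V : Type*} (P N : Finset (V × V × V)) (S : Finset (V × V))
    (M : V → ZFSet) : Prop :=
  ModelsLits P N M ∧ ∀ p ∈ S, M p.1 = {M p.2}

/-- The pair of assignments `(M, T)` satisfies the Ξ-conditions for the
constraint system `(P, N, S)`. -/
def XiConditions {V : Type*} (S : Finset (V × V)) (M T : V → ZFSet) : Prop :=
  (∀ p ∈ S, ¬ M p.1 ⊆ M p.2) ∧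
  (∀ p ∈ S, ∀ q ∈ S, (M p.2 = M q.2 ↔ M p.1 = M q.1)) ∧
  (∀ p ∈ S, ∀ v : V, M p.1 ∩ M v ≠ ∅ → M p.1 ⊆ M v) ∧
  (∀ p ∈ S, ∀ v : V, M p.1 ∩ M v ≠ ∅ → T p.2 ⊆ T v ∧ T p.2 ≠ T v) ∧
  (∀ u v : V, M u = M v → T u = T v)

open Classical in
/-- The modified assignment `M_{x,y}`. -/
noncomputable def modifyAssign {V : Type*} (M : V → ZFSet) (x y : V) : V → ZFSet :=
  fun v => if M x ∩ M v = ∅ then M v else (M v \ M x) ∪ {M y}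

/-! Let `F z := M'' q.2` when `z` lies in an atom `M q.1` with `q ∈ S`, and
`F z := {z, Ω}` otherwise, and put `M'' v := {F z | z ∈ M v}`. By (iv) this recursion descends
along the strict order of `T`, and by (ii), (iii) and (v) it does not depend on the chosen atom.
Condition (iii) makes every `M v` a union of whole atoms, and `F` identifies two elements only
when they lie in a common atom: an `M'' v` has rank at most the number of `T`-predecessors
of `v` or above `rank {z, Ω}`, so when `Ω` has infinite rank above all elements no `{z, Ω}` is an
`M'' v`. Hence `M''` satisfies the same literals as `M`, and `M'' q.1 = {M'' q.2}` as atoms are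
nonempty by (i).

The model `M''` is sought in a universe possibly different from that of `M`, so `M` is first
replaced there by a family with the same Venn regions, which satisfies the same literals and
Ξ-conditions. -/

open ZFSet

universe u v w

section VennRegions

variable {I : Type*}

def vennRegions (X : I → ZFSet.{u}) : Set (Set I) :=
  Set.range fun z => {i | z ∈ X i}

variable {X : I → ZFSet.{u}} {Y : I → ZFSet.{v}}

theorem forall_iff_of_vennRegions_eq (h : vennRegions X = vennRegions Y) (Φ : Set I → Prop) :
    (∀ z, Φ {i | z ∈ X i}) ↔ ∀ y, Φ {i | y ∈ Y i} := by
  have hX := Set.forall_mem_range (f := fun z => {i | z ∈ X i}) (p := Φ)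
  have hY := Set.forall_mem_range (f := fun y => {i | y ∈ Y i}) (p := Φ)
  exact hX.symm.trans ((congrArg (fun R : Set (Set I) => ∀ s ∈ R, Φ s) h).to_iff.trans hY)

theorem subset_iff_of_vennRegions_eq (h : vennRegions X = vennRegions Y) (a b : I) :
    X a ⊆ X b ↔ Y a ⊆ Y b :=
  forall_iff_of_vennRegions_eq h fun s => a ∈ s → b ∈ s

theorem eq_iff_of_vennRegions_eq (h : vennRegions X = vennRegions Y) (a b : I) :
    X a = X b ↔ Y a = Y b := by
  simp only [ZFSet.ext_iff]
  exact forall_iff_of_vennRegions_eq h fun s => a ∈ s ↔ b ∈ s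

theorem eq_sdiff_iff_of_vennRegions_eq (h : vennRegions X = vennRegions Y) (a b c : I) :
    X a = X b \ X c ↔ Y a = Y b \ Y c := by
  simp only [ZFSet.ext_iff, mem_sdiff]
  exact forall_iff_of_vennRegions_eq h fun s => a ∈ s ↔ b ∈ s ∧ c ∉ s

theorem inter_eq_empty_iff_of_vennRegions_eq (h : vennRegions X = vennRegions Y) (a b : I) :
    X a ∩ X b = ∅ ↔ Y a ∩ Y b = ∅ := by
  simp only [eq_empty, mem_inter]
  exact forall_iff_of_vennRegions_eq h fun s => ¬(a ∈ s ∧ b ∈ s)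

theorem empty_mem_vennRegions [Finite I] (X : I → ZFSet.{u}) : ∅ ∈ vennRegions X := by
  refine ⟨⋃₀ range X, Set.eq_empty_of_forall_notMem fun i hi => ?_⟩
  exact mem_irrefl _ (mem_sUnion.2 ⟨X i, mem_range.2 ⟨i, rfl⟩, hi⟩)

/-- Each realised region `s` is represented by a single element, coding `s` by a natural number,
which makes sense in every universe. -/
theorem exists_vennRegions_eq [Finite I] (X : I → ZFSet.{u}) :
    ∃ Y : I → ZFSet.{v}, vennRegions Y = vennRegions X := by
  obtain ⟨e, he⟩ := Countable.exists_injective_nat (Set I)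
  set code : Set I → ZFSet.{v} := fun s => (e s : Ordinal).toZFSet
  have hcode : Function.Injective code :=
    Ordinal.toZFSet_injective.comp (Nat.cast_injective.comp he)
  set Y : I → ZFSet.{v} := fun i => range fun s : {s // s ∈ vennRegions X ∧ i ∈ s} => code s
  have hY : ∀ y i, y ∈ Y i ↔ ∃ s ∈ vennRegions X, i ∈ s ∧ code s = y := by
    simp [Y, and_assoc]
  have hcodeY : ∀ s ∈ vennRegions X, {i | code s ∈ Y i} = s := by
    intro s hs
    ext i
    simp only [Set.mem_ofPred_eq, hY, hcode.eq_iff]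
    exact ⟨by rintro ⟨t, -, hi, rfl⟩; exact hi, fun hi => ⟨s, hs, hi, rfl⟩⟩
  refine ⟨Y, Set.Subset.antisymm ?_ fun s hs => ⟨code s, hcodeY s hs⟩⟩
  rintro _ ⟨y, rfl⟩
  by_cases hy : ∃ s ∈ vennRegions X, code s = y
  · obtain ⟨s, hs, rfl⟩ := hy
    show {i | code s ∈ Y i} ∈ _
    rwa [hcodeY s hs]
  · convert empty_mem_vennRegions X
    refine Set.eq_empty_of_forall_notMem fun i hi => hy ?_
    obtain ⟨s, hs, -, rfl⟩ := (hY y i).1 hi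
    exact ⟨s, hs, rfl⟩

theorem modelsLits_iff_of_vennRegions_eq (h : vennRegions X = vennRegions Y)
    (P N : Finset (I × I × I)) : ModelsLits P N X ↔ ModelsLits P N Y := by
  simp only [ModelsLits, ne_eq, eq_sdiff_iff_of_vennRegions_eq h]

theorem xiConditions_iff_of_vennRegions_eq (h : vennRegions X = vennRegions Y)
    (S : Finset (I × I)) (T : I → ZFSet.{w}) : XiConditions S X T ↔ XiConditions S Y T := by
  simp only [XiConditions, subset_iff_of_vennRegions_eq h, eq_iff_of_vennRegions_eq h, ne_eq,
    inter_eq_empty_iff_of_vennRegions_eq h]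

end VennRegions

namespace ZFSet

theorem image_congr {f g : ZFSet.{u} → ZFSet.{u}} [Definable₁ f] [Definable₁ g]
    {X : ZFSet.{u}} (h : ∀ z ∈ X, f z = g z) : image f X = image g X := by
  ext w
  simp only [mem_image]
  exact exists_congr fun z => and_congr_right fun hz => by rw [h z hz]

variable {F : ZFSet.{u} → ZFSet.{u}} [Definable₁ F] {X Y : ZFSet.{u}}

theorem subset_of_image_subset_image (hF : ∀ z ∈ X, ∀ z' ∈ Y, F z = F z' → z ∈ Y)
    (h : image F X ⊆ image F Y) : X ⊆ Y := fun z hz => by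
  obtain ⟨z', hz', he⟩ := mem_image.1 (h (mem_image.2 ⟨z, hz, rfl⟩))
  exact hF z hz z' hz' he.symm

theorem image_sdiff (hF : ∀ z ∈ X, ∀ z' ∈ Y, F z = F z' → z ∈ Y) :
    image F (X \ Y) = image F X \ image F Y := by
  ext w
  simp only [mem_sdiff, mem_image]
  constructor
  · rintro ⟨z, ⟨hzX, hzY⟩, rfl⟩
    exact ⟨⟨z, hzX, rfl⟩, fun ⟨z', hz', he⟩ => hzY (hF z hzX z' hz' he.symm)⟩
  · rintro ⟨⟨z, hzX, rfl⟩, hw⟩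
    exact ⟨z, ⟨hzX, fun hzY => hw ⟨z, hzY, rfl⟩⟩, rfl⟩

theorem pair_left_injective (Ω : ZFSet.{u}) :
    Function.Injective fun z : ZFSet.{u} => ({z, Ω} : ZFSet) := by
  intro z z' (he : ({z, Ω} : ZFSet) = {z', Ω})
  have hz : z ∈ ({z', Ω} : ZFSet) := he ▸ mem_insert z _
  rcases mem_pair.1 hz with rfl | rfl
  · rfl
  · have hz' : z' ∈ ({z, z} : ZFSet) := he ▸ mem_insert z' _
    exact (mem_pair.1 hz').elim Eq.symm Eq.symm

end ZFSet

section NumBelow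

open Finset

variable {V α : Type*} [Fintype V] [Preorder α]

open Classical in
noncomputable def numBelow (f : V → α) (v : V) : ℕ := #{u | f u < f v}

theorem numBelow_lt_numBelow {f : V → α} {u v : V} (h : f u < f v) :
    numBelow f u < numBelow f v := by
  refine Finset.card_lt_card ⟨fun w hw => ?_, fun hsub => ?_⟩
  · simp only [mem_filter, mem_univ, true_and] at hw ⊢
    exact hw.trans h
  · have := hsub (by simpa using h)
    simp at this

end NumBelow

section Saturated

variable {V : Type*} (S : Finset (V × V)) (M : V → ZFSet.{u})

def Saturated (Y : ZFSet.{u}) : Prop :=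
  ∀ q ∈ S, ∀ z ∈ M q.1, z ∈ Y → M q.1 ⊆ Y

variable {S M}

theorem Saturated.sdiff {X Y : ZFSet.{u}} (hX : Saturated S M X) (hY : Saturated S M Y) :
    Saturated S M (X \ Y) := by
  intro q hq z hzq hz w hw
  obtain ⟨hzX, hzY⟩ := mem_sdiff.1 hz
  exact mem_sdiff.2 ⟨hX q hq z hzq hzX hw, fun hwY => hzY (hY q hq w hw hwY hzq)⟩

end Saturated

namespace XiConditions

variable {V : Type*} {S : Finset (V × V)} {M : V → ZFSet.{u}} {T : V → ZFSet.{v}}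

theorem saturated (hXi : XiConditions S M T) (v : V) : Saturated S M (M v) :=
  fun q hq z hzq hzv => hXi.2.2.1 q hq v fun he => (eq_empty _).1 he z (mem_inter.2 ⟨hzq, hzv⟩)

theorem snd_eq_of_mem (hXi : XiConditions S M T) {q r : V × V} (hq : q ∈ S) (hr : r ∈ S)
    {z : ZFSet.{u}} (hzq : z ∈ M q.1) (hzr : z ∈ M r.1) : M q.2 = M r.2 :=
  (hXi.2.1 q hq r hr).2 <|
    le_antisymm (hXi.saturated r.1 q hq z hzq hzr) (hXi.saturated q.1 r hr z hzr hzq)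

theorem numBelow_lt [Fintype V] (hXi : XiConditions S M T) {q : V × V} (hq : q ∈ S) {v : V}
    {z : ZFSet.{u}} (hzq : z ∈ M q.1) (hzv : z ∈ M v) : numBelow T q.2 < numBelow T v :=
  have h := hXi.2.2.2.1 q hq v fun he => (eq_empty _).1 he z (mem_inter.2 ⟨hzq, hzv⟩)
  numBelow_lt_numBelow (lt_of_le_of_ne h.1 h.2)

theorem numBelow_eq [Fintype V] (hXi : XiConditions S M T) {u v : V} (h : M u = M v) :
    numBelow T u = numBelow T v := by
  unfold numBelow
  rw [hXi.2.2.2.2 u v h]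

end XiConditions

section Collapse

attribute [local instance] Classical.allZFSetDefinable

variable {V : Type*} [Fintype V] (S : Finset (V × V)) (M : V → ZFSet.{u}) (T : V → ZFSet.{v})
  (Ω : ZFSet.{u})

open Classical in
/-- The guard `numBelow T q.2 < n` only serves termination: under the Ξ-conditions it holds
whenever it is consulted (see `collapsed_eq_image`). -/
noncomputable def collapse : ℕ → ZFSet.{u} → ZFSet.{u}
  | n, X => image (fun z => if h : ∃ q ∈ S, z ∈ M q.1 ∧ numBelow T q.2 < n then
      collapse (numBelow T h.choose.2) (M h.choose.2) else {z, Ω}) X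
termination_by n => n
decreasing_by exact h.choose_spec.2.2

noncomputable def collapsed (v : V) : ZFSet.{u} :=
  collapse S M T Ω (numBelow T v) (M v)

open Classical in
noncomputable def collapseElem (z : ZFSet.{u}) : ZFSet.{u} :=
  if h : ∃ q ∈ S, z ∈ M q.1 then collapsed S M T Ω h.choose.2 else {z, Ω}

variable {S M T Ω}

theorem collapsed_eq_of_eq (hXi : XiConditions S M T) {u v : V} (h : M u = M v) :
    collapsed S M T Ω u = collapsed S M T Ω v := by
  rw [collapsed, collapsed, h, hXi.numBelow_eq h]

theorem collapseElem_of_mem (hXi : XiConditions S M T) {q : V × V} (hq : q ∈ S) {z : ZFSet.{u}}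
    (hz : z ∈ M q.1) : collapseElem S M T Ω z = collapsed S M T Ω q.2 := by
  have h : ∃ q ∈ S, z ∈ M q.1 := ⟨q, hq, hz⟩
  obtain ⟨hq', hz'⟩ := h.choose_spec
  rw [collapseElem, dif_pos h]
  exact collapsed_eq_of_eq hXi (hXi.snd_eq_of_mem hq' hq hz' hz)

theorem collapseElem_of_not_mem {z : ZFSet.{u}} (h : ¬∃ q ∈ S, z ∈ M q.1) :
    collapseElem S M T Ω z = {z, Ω} :=
  dif_neg h

theorem collapsed_eq_image (hXi : XiConditions S M T) (v : V) :
    collapsed S M T Ω v = image (collapseElem S M T Ω) (M v) := by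
  rw [collapsed, collapse]
  refine image_congr fun z hz => ?_
  by_cases h : ∃ q ∈ S, z ∈ M q.1
  · obtain ⟨q, hq, hzq⟩ := h
    have hguard : ∃ q ∈ S, z ∈ M q.1 ∧ numBelow T q.2 < numBelow T v :=
      ⟨q, hq, hzq, hXi.numBelow_lt hq hzq hz⟩
    obtain ⟨hq', hzq', -⟩ := hguard.choose_spec
    rw [dif_pos hguard, collapseElem_of_mem hXi hq hzq]
    exact collapsed_eq_of_eq hXi (hXi.snd_eq_of_mem hq' hq hzq' hzq)
  · rw [dif_neg fun ⟨q, hq, hzq, _⟩ => h ⟨q, hq, hzq⟩, collapseElem_of_not_mem h]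

open Ordinal

theorem rank_collapsed_le_or_lt (hXi : XiConditions S M T)
    (hΩ : ∀ v, ∀ z ∈ M v, rank z < rank Ω) (v : V) :
    rank (collapsed S M T Ω v) ≤ numBelow T v ∨
      Order.succ (rank Ω) < rank (collapsed S M T Ω v) := by
  induction hn : numBelow T v using Nat.strong_induction_on generalizing v with
  | _ n ih =>
    refine or_iff_not_imp_right.2 fun hsmall => rank_le_iff.2 fun w hw => ?_
    have hw' : rank w < Order.succ (rank Ω) := (rank_lt_of_mem hw).trans_le (not_lt.1 hsmall)
    rw [collapsed_eq_image hXi] at hw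
    obtain ⟨z, hz, rfl⟩ := mem_image.1 hw
    by_cases h : ∃ q ∈ S, z ∈ M q.1
    · obtain ⟨q, hq, hzq⟩ := h
      have hlt := hXi.numBelow_lt hq hzq hz
      rw [collapseElem_of_mem hXi hq hzq] at hw' ⊢
      rcases ih _ (hn ▸ hlt) q.2 rfl with hle | hbig
      · exact hle.trans_lt (by exact_mod_cast hn ▸ hlt)
      · exact absurd hbig (not_lt.2 hw'.le)
    · rw [collapseElem_of_not_mem h, rank_pair,
        max_eq_right (Order.succ_le_succ (hΩ v z hz).le)] at hw'
      exact absurd hw' (lt_irrefl _)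

theorem pair_ne_collapsed (hXi : XiConditions S M T)
    (hΩ : ∀ v, ∀ z ∈ M v, rank z < rank Ω) (hω : ω ≤ rank Ω) {u : V} {z : ZFSet.{u}}
    (hz : z ∈ M u) (v : V) : {z, Ω} ≠ collapsed S M T Ω v := by
  intro he
  have hrank : rank (collapsed S M T Ω v) = Order.succ (rank Ω) := by
    rw [← he, rank_pair, max_eq_right (Order.succ_le_succ (hΩ u z hz).le)]
  rcases rank_collapsed_le_or_lt hXi hΩ v with hle | hlt
  · have : (numBelow T v : Ordinal) < Order.succ (rank Ω) :=
      (natCast_lt_omega0 _).trans_le (hω.trans (Order.le_succ _))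
    exact absurd (hrank ▸ hle) (not_le.2 this)
  · exact hrank.not_gt hlt

theorem eq_or_exists_of_collapseElem_eq (hXi : XiConditions S M T)
    (hΩ : ∀ v, ∀ z ∈ M v, rank z < rank Ω) (hω : ω ≤ rank Ω) {u u' : V}
    {z z' : ZFSet.{u}} (hz : z ∈ M u) (hz' : z' ∈ M u')
    (hinj : ∀ q ∈ S, ∀ r ∈ S, z ∈ M q.1 → z' ∈ M r.1 →
      collapsed S M T Ω q.2 = collapsed S M T Ω r.2 → M q.2 = M r.2)
    (he : collapseElem S M T Ω z = collapseElem S M T Ω z') :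
    z = z' ∨ ∃ q ∈ S, z ∈ M q.1 ∧ z' ∈ M q.1 := by
  by_cases h : ∃ q ∈ S, z ∈ M q.1 <;> by_cases h' : ∃ q ∈ S, z' ∈ M q.1
  · obtain ⟨q, hq, hzq⟩ := h
    obtain ⟨r, hr, hzr⟩ := h'
    rw [collapseElem_of_mem hXi hq hzq, collapseElem_of_mem hXi hr hzr] at he
    have hqr : M q.1 = M r.1 := (hXi.2.1 q hq r hr).1 (hinj q hq r hr hzq hzr he)
    exact Or.inr ⟨q, hq, hzq, hqr ▸ hzr⟩
  · obtain ⟨q, hq, hzq⟩ := h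
    rw [collapseElem_of_mem hXi hq hzq, collapseElem_of_not_mem h'] at he
    exact absurd he.symm (pair_ne_collapsed hXi hΩ hω hz' q.2)
  · obtain ⟨r, hr, hzr⟩ := h'
    rw [collapseElem_of_not_mem h, collapseElem_of_mem hXi hr hzr] at he
    exact absurd he (pair_ne_collapsed hXi hΩ hω hz r.2)
  · rw [collapseElem_of_not_mem h, collapseElem_of_not_mem h'] at he
    exact Or.inl (pair_left_injective Ω he)

theorem mem_of_collapseElem_eq (hXi : XiConditions S M T)
    (hΩ : ∀ v, ∀ z ∈ M v, rank z < rank Ω) (hω : ω ≤ rank Ω) {Y : ZFSet.{u}}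
    (hY : Saturated S M Y) {u u' : V} {z z' : ZFSet.{u}} (hz : z ∈ M u) (hz' : z' ∈ M u')
    (hz'Y : z' ∈ Y)
    (hinj : ∀ q ∈ S, ∀ r ∈ S, z ∈ M q.1 → z' ∈ M r.1 →
      collapsed S M T Ω q.2 = collapsed S M T Ω r.2 → M q.2 = M r.2)
    (he : collapseElem S M T Ω z = collapseElem S M T Ω z') : z ∈ Y := by
  obtain rfl | ⟨q, hq, hzq, hz'q⟩ := eq_or_exists_of_collapseElem_eq hXi hΩ hω hz hz' hinj he
  · exact hz'Y
  · exact hY q hq z' hz'q hz'Y hzq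

/-- By induction on `numBelow T`: the elements of `M q.2` and `M r.2` that `collapseElem`
identifies lie in atoms whose targets are lower. -/
theorem eq_of_collapsed_eq (hXi : XiConditions S M T)
    (hΩ : ∀ v, ∀ z ∈ M v, rank z < rank Ω) (hω : ω ≤ rank Ω) {q r : V × V}
    (hq : q ∈ S) (hr : r ∈ S) (he : collapsed S M T Ω q.2 = collapsed S M T Ω r.2) :
    M q.2 = M r.2 := by
  suffices ∀ n, ∀ q ∈ S, ∀ r ∈ S, numBelow T q.2 < n → numBelow T r.2 < n →
      collapsed S M T Ω q.2 = collapsed S M T Ω r.2 → M q.2 ⊆ M r.2 from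
    le_antisymm (this (numBelow T q.2 + numBelow T r.2 + 1) q hq r hr (by omega) (by omega) he)
      (this (numBelow T q.2 + numBelow T r.2 + 1) r hr q hq (by omega) (by omega) he.symm)
  intro n
  induction n with
  | zero => intro q _ r _ hqn; omega
  | succ n ih =>
    intro q hq r hr hqn hrn he
    rw [collapsed_eq_image hXi, collapsed_eq_image hXi] at he
    refine subset_of_image_subset_image (fun z hz z' hz' hzz' => ?_) he.le
    refine mem_of_collapseElem_eq hXi hΩ hω (hXi.saturated r.2) hz hz' hz'
      (fun s hs t ht hzs hz't hst => le_antisymm ?_ ?_) hzz'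
    · exact ih s hs t ht (by have := hXi.numBelow_lt hs hzs hz; omega)
        (by have := hXi.numBelow_lt ht hz't hz'; omega) hst
    · exact ih t ht s hs (by have := hXi.numBelow_lt ht hz't hz'; omega)
        (by have := hXi.numBelow_lt hs hzs hz; omega) hst.symm

theorem modelsSystem_collapsed {P N : Finset (V × V × V)} (hlits : ModelsLits P N M)
    (hXi : XiConditions S M T) (hΩ : ∀ v, ∀ z ∈ M v, rank z < rank Ω)
    (hω : ω ≤ rank Ω) : ModelsSystem P N S (collapsed S M T Ω) := by
  have hF : ∀ {X Y : ZFSet.{u}} {u u' : V}, X ⊆ M u → Y ⊆ M u' → Saturated S M Y →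
      ∀ z ∈ X, ∀ z' ∈ Y, collapseElem S M T Ω z = collapseElem S M T Ω z' → z ∈ Y :=
    fun hX hY hsat z hz z' hz' he => mem_of_collapseElem_eq hXi hΩ hω hsat (hX hz) (hY hz') hz'
      (fun _ hq _ hr _ _ => eq_of_collapsed_eq hXi hΩ hω hq hr) he
  have hsdiff : ∀ {b c : V}, M b \ M c ⊆ M b := fun hz => (mem_sdiff.1 hz).1
  simp only [ModelsSystem, ModelsLits, collapsed_eq_image hXi]
  refine ⟨⟨fun t ht => ?_, fun t ht he => hlits.2 t ht ?_⟩, fun p hp => ?_⟩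
  · rw [hlits.1 t ht, image_sdiff (hF le_rfl le_rfl (hXi.saturated _))]
  · rw [← image_sdiff (hF le_rfl le_rfl (hXi.saturated _))] at he
    exact le_antisymm
      (subset_of_image_subset_image
        (hF le_rfl hsdiff ((hXi.saturated _).sdiff (hXi.saturated _))) he.le)
      (subset_of_image_subset_image (hF hsdiff le_rfl (hXi.saturated _)) he.ge)
  · obtain ⟨z, hz, -⟩ : ∃ z ∈ M p.1, z ∉ M p.2 := by
      by_contra! h
      exact hXi.1 p hp h
    ext w
    rw [mem_image, mem_singleton, ← collapsed_eq_image hXi]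
    refine ⟨fun ⟨z', hz', he⟩ => he ▸ collapseElem_of_mem hXi hp hz', ?_⟩
    rintro rfl
    exact ⟨z, hz, collapseElem_of_mem hXi hp hz⟩

end Collapse

theorem exists_rank_lt_rank_and_omega0_le {V : Type*} [Finite V] (M : V → ZFSet.{u}) :
    ∃ Ω : ZFSet.{u}, (∀ v, ∀ z ∈ M v, rank z < rank Ω) ∧ ω ≤ rank Ω := by
  refine ⟨range M ∪ V_ ω, fun v z hz => ?_, ?_⟩
  · rw [rank_union]
    exact (rank_lt_of_mem hz).trans <|
      (rank_lt_of_mem (mem_range.2 ⟨v, rfl⟩)).trans_le (le_max_left _ _)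
  · rw [rank_union, rank_vonNeumann]
    exact le_max_right _ _

theorem xi_sat_implies_system_sat {V : Type*} [Fintype V]
    (P N : Finset (V × V × V)) (S : Finset (V × V))
    (h : ∃ M T : V → ZFSet, ModelsLits P N M ∧ XiConditions S M T) :
    ∃ M'' : V → ZFSet, ModelsSystem P N S M'' := by
  obtain ⟨M, T, hlits, hXi⟩ := h
  obtain ⟨M', hM'⟩ := exists_vennRegions_eq M
  obtain ⟨Ω, hΩ, hω⟩ := exists_rank_lt_rank_and_omega0_le M'
  exact ⟨collapsed S M' T Ω, modelsSystem_collapsed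
    ((modelsLits_iff_of_vennRegions_eq hM' P N).2 hlits)
    ((xiConditions_iff_of_vennRegions_eq hM' S T).2 hXi) hΩ hω⟩
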